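/- Consequently, if P(θ) ≥ 1/(1 + c ℓ(θ,θ;2/α)) for all θ > 0 with constant c ∈ [0,1] and α > 2, then E[log₂(1+γ)] ≥ (1/ln 2) ∫₀^∞ dθ / ((1+θ)(1 + c ℓ(θ,θ;2/α))), and this lower bound is finite and strictly positive. -/

import Mathlib

open Real Set MeasureTheory ProbabilityTheory

/-- The function `ℓ(x, y; z) = x^z (πz/sin(πz) − ∫₀^{y^{−z}} dt/(1 + t^{1/z}))` from the paper. -/
noncomputable def ell (x y z : ℝ) : ℝ :=
  x ^ z * (π * z / Real.sin (π * z) - ∫ t in Set.Ioc (0:ℝ) (y ^ (-z)), (1 + t ^ (1 / z))⁻¹)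

/-!
Since `log₂(1 + x) = ∫₀ˣ dθ / ((1 + θ) ln 2)`, the layer-cake formula gives
`E[log₂(1 + γ)] = ∫₀^∞ P(θ) dθ / ((1 + θ) ln 2)`, and the assumed lower bound on `P` is integrated
against this weight. The subtracted integral in `ℓ(θ, θ; z)` is at most `θ^{-z}`, so
`1 + c ℓ(θ, θ; z) ≥ c (πz / sin πz) θ^z`; for `c > 0` the integrand is therefore
`O(θ^{-z} / (1 + θ))`, integrable on `(0, ∞)` because `z = 2/α ∈ (0, 1)`. The case `c = 0` cannot
occur, as it would force `P(θ) = 1` for every `θ > 0`.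
-/

open Filter

section Ell

variable {z θ : ℝ}

lemma pi_mul_div_sin_pi_mul_pos (hz0 : 0 < z) (hz1 : z < 1) : 0 < π * z / sin (π * z) :=
  div_pos (by positivity) (sin_pos_of_pos_of_lt_pi (by positivity) (by nlinarith [pi_pos]))

lemma inv_one_add_rpow_mem_Icc {t : ℝ} (ht : 0 ≤ t) : (1 + t ^ (1 / z))⁻¹ ∈ Icc 0 1 := by
  have := rpow_nonneg ht (1 / z)
  exact ⟨by positivity, inv_le_one_of_one_le₀ (by linarith)⟩

lemma integrableOn_inv_one_add_rpow_Ioc (a : ℝ) :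
    IntegrableOn (fun t : ℝ => (1 + t ^ (1 / z))⁻¹) (Ioc 0 a) := by
  refine Measure.integrableOn_of_bounded (M := 1) measure_Ioc_lt_top.ne (by fun_prop) ?_
  filter_upwards [ae_restrict_mem measurableSet_Ioc] with t ht
  obtain ⟨h0, h1⟩ := inv_one_add_rpow_mem_Icc (z := z) ht.1.le
  rwa [norm_of_nonneg h0]

lemma setIntegral_inv_one_add_rpow_le {a : ℝ} (ha : 0 ≤ a) :
    ∫ t in Ioc 0 a, (1 + t ^ (1 / z))⁻¹ ≤ a := by
  calc ∫ t in Ioc 0 a, (1 + t ^ (1 / z))⁻¹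
      ≤ ∫ _ in Ioc 0 a, (1 : ℝ) :=
        setIntegral_mono_on (integrableOn_inv_one_add_rpow_Ioc a) (integrableOn_const
          measure_Ioc_lt_top.ne) measurableSet_Ioc fun _ ht => (inv_one_add_rpow_mem_Icc ht.1.le).2
    _ = a := by simp [ha]

lemma monotone_setIntegral_inv_one_add_rpow :
    Monotone fun a : ℝ => ∫ t in Ioc 0 a, (1 + t ^ (1 / z))⁻¹ := fun _ b hab =>
  setIntegral_mono_set (integrableOn_inv_one_add_rpow_Ioc b)
    ((ae_restrict_mem measurableSet_Ioc).mono fun _ ht => (inv_one_add_rpow_mem_Icc ht.1.le).1)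
    (Ioc_subset_Ioc_right hab).eventuallyLE

lemma measurable_ell_self : Measurable fun θ : ℝ => ell θ θ z :=
  (measurable_id.pow_const z).mul (measurable_const.sub
    (monotone_setIntegral_inv_one_add_rpow.measurable.comp (measurable_id.pow_const (-z))))

lemma sub_one_le_ell_self (hθ : 0 < θ) : π * z / sin (π * z) * θ ^ z - 1 ≤ ell θ θ z := by
  have hI := setIntegral_inv_one_add_rpow_le (z := z) (rpow_nonneg hθ.le (-z))
  have hpow : 0 < θ ^ z := rpow_pos_of_pos hθ z
  have hmul : θ ^ z * θ ^ (-z) = 1 := by rw [← rpow_add hθ, add_neg_cancel, rpow_zero]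
  unfold ell
  nlinarith

lemma mul_rpow_le_one_add_mul_ell_self {c : ℝ} (hc0 : 0 ≤ c) (hc1 : c ≤ 1) (hθ : 0 < θ) :
    c * (π * z / sin (π * z)) * θ ^ z ≤ 1 + c * ell θ θ z := by
  nlinarith [mul_le_mul_of_nonneg_left (sub_one_le_ell_self (z := z) hθ) hc0]

lemma one_add_mul_ell_self_pos (hz0 : 0 < z) (hz1 : z < 1) {c : ℝ} (hc : 0 < c) (hc1 : c ≤ 1)
    (hθ : 0 < θ) : 0 < 1 + c * ell θ θ z := by
  have := pi_mul_div_sin_pi_mul_pos hz0 hz1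
  exact (by positivity : 0 < c * (π * z / sin (π * z)) * θ ^ z).trans_le
    (mul_rpow_le_one_add_mul_ell_self hc.le hc1 hθ)

end Ell

lemma integrableOn_Ioi_inv_one_add_mul_rpow {z : ℝ} (hz0 : 0 < z) (hz1 : z < 1) :
    IntegrableOn (fun θ : ℝ => ((1 + θ) * θ ^ z)⁻¹) (Ioi 0) := by
  -- `rpowIntegrand₀₁ (1 - z) θ 1 = θ ^ (1 - z) (θ⁻¹ - (θ + 1)⁻¹) = ((1 + θ) θ ^ z)⁻¹`
  refine (integrableOn_rpowIntegrand₀₁_Ioi (p := 1 - z) ⟨by linarith, by linarith⟩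
    zero_le_one).congr_fun (fun θ (hθ : 0 < θ) => ?_) measurableSet_Ioi
  simp only [rpowIntegrand₀₁]
  rw [rpow_sub hθ, rpow_one]
  field_simp
  ring

lemma inv_one_add_mul_one_add_mul_ell_self_pos {z c θ : ℝ} (hz0 : 0 < z) (hz1 : z < 1)
    (hc : 0 < c) (hc1 : c ≤ 1) (hθ : 0 < θ) : 0 < ((1 + θ) * (1 + c * ell θ θ z))⁻¹ :=
  inv_pos.2 (mul_pos (by linarith) (one_add_mul_ell_self_pos hz0 hz1 hc hc1 hθ))

lemma integrableOn_Ioi_inv_one_add_mul_one_add_mul_ell_self {z c : ℝ} (hz0 : 0 < z)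
    (hz1 : z < 1) (hc : 0 < c) (hc1 : c ≤ 1) :
    IntegrableOn (fun θ : ℝ => ((1 + θ) * (1 + c * ell θ θ z))⁻¹) (Ioi 0) := by
  set K := π * z / sin (π * z)
  have hK : 0 < K := pi_mul_div_sin_pi_mul_pos hz0 hz1
  refine ((integrableOn_Ioi_inv_one_add_mul_rpow hz0 hz1).const_mul (c * K)⁻¹).mono'
    ((measurable_const.add measurable_id).mul
      (measurable_const.add (measurable_ell_self.const_mul c))).inv.aestronglyMeasurable ?_
  filter_upwards [ae_restrict_mem measurableSet_Ioi] with θ (hθ : 0 < θ)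
  rw [norm_of_nonneg (inv_one_add_mul_one_add_mul_ell_self_pos hz0 hz1 hc hc1 hθ).le, ← mul_inv]
  refine inv_anti₀ (by positivity) ?_
  calc c * K * ((1 + θ) * θ ^ z) = (1 + θ) * (c * K * θ ^ z) := by ring
    _ ≤ (1 + θ) * (1 + c * ell θ θ z) :=
      mul_le_mul_of_nonneg_left (mul_rpow_le_one_add_mul_ell_self hc.le hc1 hθ) (by linarith)

lemma integral_Ioi_inv_one_add_mul_one_add_mul_ell_self_pos {z c : ℝ} (hz0 : 0 < z)
    (hz1 : z < 1) (hc : 0 < c) (hc1 : c ≤ 1) :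
    0 < ∫ θ in Ioi 0, ((1 + θ) * (1 + c * ell θ θ z))⁻¹ := by
  have hpos (θ : ℝ) (hθ : θ ∈ Ioi 0) := inv_one_add_mul_one_add_mul_ell_self_pos hz0 hz1 hc hc1 hθ
  rw [setIntegral_pos_iff_support_of_nonneg_ae
    (ae_restrict_of_forall_mem measurableSet_Ioi fun θ hθ => (hpos θ hθ).le)
    (integrableOn_Ioi_inv_one_add_mul_one_add_mul_ell_self hz0 hz1 hc hc1),
    inter_eq_right.2 fun θ hθ => Function.mem_support.2 (hpos θ hθ).ne']
  simp

lemma exists_measure_le_lt_one {Ω : Type*} [MeasurableSpace Ω] {μ : Measure Ω}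
    [IsProbabilityMeasure μ] {X : Ω → ℝ} (hX : Measurable X) :
    ∃ θ > 0, μ {ω | θ ≤ X ω} < 1 := by
  have hempty : ⋂ n : ℕ, {ω | (n : ℝ) + 1 ≤ X ω} = ∅ :=
    iInter_eq_empty_iff.2 fun ω => (exists_nat_gt (X ω)).imp
      fun n hn (h : (n : ℝ) + 1 ≤ X ω) => by linarith
  have hlim : Tendsto (fun n : ℕ => μ {ω | (n : ℝ) + 1 ≤ X ω}) atTop (nhds 0) := by
    have := tendsto_measure_iInter_atTop (μ := μ) (s := fun n : ℕ => {ω | (n : ℝ) + 1 ≤ X ω})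
      (fun n => (hX measurableSet_Ici).nullMeasurableSet)
      (fun m n hmn ω (h : (n : ℝ) + 1 ≤ X ω) => show (m : ℝ) + 1 ≤ X ω from
        le_trans (by gcongr) h)
      ⟨0, measure_ne_top μ _⟩
    rwa [hempty, measure_empty] at this
  obtain ⟨n, hn⟩ := (hlim.eventually (gt_mem_nhds zero_lt_one)).exists
  exact ⟨n + 1, by positivity, hn⟩

lemma integral_inv_one_add_mul_log {b x : ℝ} (hx : -1 < x) :
    ∫ t in (0 : ℝ)..x, ((1 + t) * log b)⁻¹ = logb b (1 + x) := by
  simp_rw [mul_inv]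
  rw [intervalIntegral.integral_mul_const, intervalIntegral.integral_comp_add_left (·⁻¹),
    integral_inv_of_pos (by norm_num) (by linarith), add_zero, div_one, logb, div_eq_mul_inv]

lemma lintegral_ofReal_logb_one_add {Ω : Type*} [MeasurableSpace Ω] (μ : Measure Ω)
    {X : Ω → ℝ} (hX : AEMeasurable X μ) (hX0 : 0 ≤ᵐ[μ] X) {b : ℝ} (hb : 1 < b) :
    ∫⁻ ω, ENNReal.ofReal (logb b (1 + X ω)) ∂μ =
      ∫⁻ t in Ioi 0, μ {ω | t ≤ X ω} * ENNReal.ofReal ((1 + t) * log b)⁻¹ := by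
  have hlog : 0 < log b := log_pos hb
  have hcont : ContinuousOn (fun t : ℝ => ((1 + t) * log b)⁻¹) (Ici 0) :=
    ContinuousOn.inv₀ (by fun_prop) fun t (ht : 0 ≤ t) => by positivity
  rw [← lintegral_comp_eq_lintegral_meas_le_mul μ hX0 hX
    (fun t ht => (hcont.mono (by rw [uIcc_of_le ht.le]; exact Icc_subset_Ici_self)).intervalIntegrable)
    ((ae_restrict_mem measurableSet_Ioi).mono fun t (ht : 0 < t) => by positivity)]
  refine lintegral_congr_ae (hX0.mono fun ω (hω : 0 ≤ X ω) => ?_)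
  dsimp only
  rw [integral_inv_one_add_mul_log (by linarith)]

/-- If the survival function of `γ` satisfies `P(θ) ≥ 1/(1 + c ℓ(θ,θ;2/α))` for all `θ > 0`
with `c ∈ [0,1]` and `α > 2`, then
`E[log₂(1+γ)] ≥ (1/ln 2) ∫₀^∞ dθ/((1+θ)(1 + c ℓ(θ,θ;2/α)))`, and this lower bound is
finite (the integrand is integrable on `(0,∞)`) and strictly positive. -/
theorem stmt15 {Ω : Type*} [MeasureSpace Ω] [IsProbabilityMeasure (ℙ : Measure Ω)]
    (γ : Ω → ℝ) (hmeas : Measurable γ) (hγ : ∀ ω, 0 ≤ γ ω)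
    (α c : ℝ) (hα : 2 < α) (hc0 : 0 ≤ c) (hc1 : c ≤ 1)
    (hP : ∀ θ : ℝ, 0 < θ →
      ENNReal.ofReal ((1 + c * ell θ θ (2 / α))⁻¹) ≤ ℙ {ω | θ ≤ γ ω}) :
    IntegrableOn (fun θ : ℝ => ((1 + θ) * (1 + c * ell θ θ (2 / α)))⁻¹) (Set.Ioi 0) ∧
    0 < (1 / Real.log 2) *
        ∫ θ in Set.Ioi (0:ℝ), ((1 + θ) * (1 + c * ell θ θ (2 / α)))⁻¹ ∧
    ENNReal.ofReal ((1 / Real.log 2) *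
        ∫ θ in Set.Ioi (0:ℝ), ((1 + θ) * (1 + c * ell θ θ (2 / α)))⁻¹)
      ≤ ∫⁻ ω, ENNReal.ofReal (Real.logb 2 (1 + γ ω)) ∂ℙ := by
  have hz0 : 0 < 2 / α := div_pos two_pos (by linarith)
  have hz1 : 2 / α < 1 := (div_lt_one (by linarith)).2 hα
  have hc : 0 < c := by
    refine hc0.lt_of_ne fun hc => ?_
    obtain ⟨θ, hθ, hlt⟩ := exists_measure_le_lt_one (μ := ℙ) hmeas
    simpa [← hc] using (hP θ hθ).trans_lt hlt
  have hint := integrableOn_Ioi_inv_one_add_mul_one_add_mul_ell_self hz0 hz1 hc hc1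
  have hlog : 0 < log 2 := log_pos one_lt_two
  refine ⟨hint, mul_pos (by positivity)
    (integral_Ioi_inv_one_add_mul_one_add_mul_ell_self_pos hz0 hz1 hc hc1), ?_⟩
  rw [← integral_const_mul, ofReal_integral_eq_lintegral_ofReal (hint.const_mul _)
      (ae_restrict_of_forall_mem measurableSet_Ioi fun θ hθ =>
        mul_nonneg (by positivity) (inv_one_add_mul_one_add_mul_ell_self_pos hz0 hz1 hc hc1 hθ).le),
    lintegral_ofReal_logb_one_add ℙ hmeas.aemeasurable (ae_of_all _ hγ) one_lt_two]
  refine setLIntegral_mono' measurableSet_Ioi fun θ (hθ : 0 < θ) => ?_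
  have hD := one_add_mul_ell_self_pos hz0 hz1 hc hc1 hθ
  calc ENNReal.ofReal (1 / log 2 * ((1 + θ) * (1 + c * ell θ θ (2 / α)))⁻¹)
      = ENNReal.ofReal (1 + c * ell θ θ (2 / α))⁻¹ * ENNReal.ofReal ((1 + θ) * log 2)⁻¹ := by
        rw [← ENNReal.ofReal_mul (inv_pos.2 hD).le, mul_inv, mul_inv]
        congr 1
        ring
    _ ≤ _ := by gcongr; exact hP θ hθ
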